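/- arXiv:math/9910109 — 3 statements merged into one kernel-verified Lean document; each statement's English description precedes it below -/
import Mathlib

section
/- If X is an extremally disconnected compact Hausdorff space, then the lattice C(X, ℝ) of real-valued continuous functions is Dedekind complete: every non-empty family of continuous functions that is bounded above has a least upper bound in C(X, ℝ). -/
/-!
For each real `q` the set where some member of `S` exceeds `q` is open, so its closure
`V q = supLevelClosure S q` is clopen, and `V` is antitone in `q`. The candidate supremum is
`g x = levelSup S x = sup {q | x ∈ V q}`.
Openness of the `V q` makes `g` lower semicontinuous and their closedness makes it upper
semicontinuous, so `g` is continuous. Every `f ∈ S` lies below `g` since `{f > q} ⊆ V q`,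
and every upper bound `c` of `S` lies above it since `V q ⊆ {c ≥ q}`, the latter set being
closed.
-/

open Set Filter Topology

namespace ContinuousMap

variable {X : Type*} [TopologicalSpace X] {S : Set C(X, ℝ)}

def supLevelClosure (S : Set C(X, ℝ)) (q : ℝ) : Set X :=
  closure (⋃ f ∈ S, f ⁻¹' Ioi q)

theorem preimage_Ioi_subset_supLevelClosure {f : C(X, ℝ)} (hf : f ∈ S) (q : ℝ) :
    f ⁻¹' Ioi q ⊆ supLevelClosure S q :=
  (subset_biUnion_of_mem (u := fun f : C(X, ℝ) => f ⁻¹' Ioi q) hf).trans subset_closure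

theorem supLevelClosure_antitone : Antitone (supLevelClosure S) := fun _ _ hqq' =>
  closure_mono <| iUnion₂_mono fun _ _ => preimage_mono (Ioi_subset_Ioi hqq')

theorem isClopen_supLevelClosure [ExtremallyDisconnected X] (q : ℝ) :
    IsClopen (supLevelClosure S q) :=
  ⟨isClosed_closure, ExtremallyDisconnected.open_closure _ <|
    isOpen_biUnion fun f _ => isOpen_Ioi.preimage f.continuous⟩

theorem supLevelClosure_subset_of_mem_upperBounds {c : C(X, ℝ)} (hc : c ∈ upperBounds S)
    (q : ℝ) : supLevelClosure S q ⊆ {x | q ≤ c x} :=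
  closure_minimal (iUnion₂_subset fun _ hf x hx => (le_of_lt hx).trans (hc hf x))
    (isClosed_le continuous_const c.continuous)

noncomputable def levelSup (S : Set C(X, ℝ)) (x : X) : ℝ :=
  sSup {q | x ∈ supLevelClosure S q}

theorem bddAbove_levels (hbdd : BddAbove S) (x : X) :
    BddAbove {q | x ∈ supLevelClosure S q} :=
  let ⟨c, hc⟩ := hbdd
  ⟨c x, fun q hq => supLevelClosure_subset_of_mem_upperBounds hc q hq⟩

theorem levels_nonempty (hne : S.Nonempty) (x : X) : {q | x ∈ supLevelClosure S q}.Nonempty :=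
  let ⟨f, hf⟩ := hne
  ⟨f x - 1, preimage_Ioi_subset_supLevelClosure hf _ (sub_one_lt (f x))⟩

theorem le_levelSup_of_mem_supLevelClosure (hbdd : BddAbove S) {x : X} {q : ℝ}
    (hx : x ∈ supLevelClosure S q) : q ≤ levelSup S x :=
  le_csSup (bddAbove_levels hbdd x) hx

theorem le_levelSup (hbdd : BddAbove S) {f : C(X, ℝ)} (hf : f ∈ S) (x : X) :
    f x ≤ levelSup S x :=
  le_of_forall_lt_imp_le_of_dense fun _ hq =>
    le_levelSup_of_mem_supLevelClosure hbdd (preimage_Ioi_subset_supLevelClosure hf _ hq)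

theorem levelSup_le (hne : S.Nonempty) {c : C(X, ℝ)} (hc : c ∈ upperBounds S) (x : X) :
    levelSup S x ≤ c x :=
  csSup_le (levels_nonempty hne x) fun q hq => supLevelClosure_subset_of_mem_upperBounds hc q hq

theorem levelSup_le_of_notMem_supLevelClosure (hne : S.Nonempty) {x : X} {q : ℝ}
    (hx : x ∉ supLevelClosure S q) : levelSup S x ≤ q :=
  csSup_le (levels_nonempty hne x) fun _ hq' =>
    le_of_not_gt fun hlt => hx (supLevelClosure_antitone hlt.le hq')

variable [ExtremallyDisconnected X]

theorem lowerSemicontinuous_levelSup (hne : S.Nonempty) (hbdd : BddAbove S) :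
    LowerSemicontinuous (levelSup S) := by
  intro x r hr
  obtain ⟨q, hxq, hrq⟩ := exists_lt_of_lt_csSup (levels_nonempty hne x) hr
  filter_upwards [(isClopen_supLevelClosure q).isOpen.mem_nhds hxq] with y hy
  exact hrq.trans_le (le_levelSup_of_mem_supLevelClosure hbdd hy)

theorem upperSemicontinuous_levelSup (hne : S.Nonempty) (hbdd : BddAbove S) :
    UpperSemicontinuous (levelSup S) := by
  intro x r hr
  obtain ⟨q, hxq, hqr⟩ := exists_between hr
  have hx : x ∉ supLevelClosure S q := fun hx =>
    hxq.not_ge (le_levelSup_of_mem_supLevelClosure hbdd hx)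
  filter_upwards [(isClopen_supLevelClosure q).isClosed.isOpen_compl.mem_nhds hx] with y hy
  exact (levelSup_le_of_notMem_supLevelClosure hne hy).trans_lt hqr

theorem isLUB_levelSup (hne : S.Nonempty) (hbdd : BddAbove S) :
    IsLUB S ⟨levelSup S, continuous_iff_lower_upperSemicontinuous.mpr
      ⟨lowerSemicontinuous_levelSup hne hbdd, upperSemicontinuous_levelSup hne hbdd⟩⟩ :=
  ⟨fun _ hf x => le_levelSup hbdd hf x, fun _ hc x => levelSup_le hne hc x⟩

end ContinuousMap

theorem dedekind_complete_of_extremallyDisconnected_general {X : Type*} [TopologicalSpace X]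
    [ExtremallyDisconnected X] (S : Set C(X, ℝ))
    (hne : S.Nonempty) (hbdd : BddAbove S) : ∃ g : C(X, ℝ), IsLUB S g :=
  ⟨_, ContinuousMap.isLUB_levelSup hne hbdd⟩

/-- If `X` is an extremally disconnected compact Hausdorff space, then `C(X, ℝ)` is
Dedekind complete: every non-empty family of continuous functions bounded above has a
least upper bound in `C(X, ℝ)`. -/
theorem dedekind_complete_of_extremallyDisconnected {X : Type*} [TopologicalSpace X]
    [CompactSpace X] [T2Space X] [ExtremallyDisconnected X] (S : Set C(X, ℝ))
    (hne : S.Nonempty) (hbdd : BddAbove S) : ∃ g : C(X, ℝ), IsLUB S g :=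
  dedekind_complete_of_extremallyDisconnected_general S hne hbdd
end

section
/- Every Borel measurable function from a topological space to a second countable topological space has the Baire property: there is a meager set off which the function is continuous. -/
/-- Every Borel measurable function from a topological space to a second countable
topological space has the Baire property: there is a meager set off which the
function is continuous. -/
theorem borel_measurable_baire_property {X Y : Type*} [TopologicalSpace X] [MeasurableSpace X]
    [BorelSpace X] [TopologicalSpace Y] [MeasurableSpace Y] [BorelSpace Y]
    [SecondCountableTopology Y] (f : X → Y) (hf : Measurable f) :
    ∃ M : Set X, IsMeagre M ∧ ContinuousOn f Mᶜ := by
  obtain ⟨b, hbc, -, hb⟩ := TopologicalSpace.exists_countable_basis Y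
  have key : ∀ s ∈ b, ∃ u : Set X, IsOpen u ∧ f ⁻¹' s =ᶠ[residual X] u := by
    intro s hs
    exact ((hf (hb.isOpen hs).measurableSet)).residualEq_isOpen
  choose! u hu hresid using key
  set M : Set X := ⋃ s ∈ b, {x | ¬ (x ∈ f ⁻¹' s ↔ x ∈ u s)} with hM
  have hMmeagre : IsMeagre M := by
    rw [IsMeagre, hM, Set.compl_iUnion₂]
    refine (countable_bInter_mem hbc).mpr ?_
    intro s hs
    have := hresid s hs
    rw [Filter.eventuallyEq_set] at this
    exact this.mono (fun x hx h => h hx)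
  refine ⟨M, hMmeagre, ?_⟩
  rw [continuousOn_iff_continuous_restrict]
  rw [hb.continuous_iff]
  intro s hs
  have heq : (Mᶜ.restrict f) ⁻¹' s = Subtype.val ⁻¹' (u s) := by
    ext ⟨x, hx⟩
    simp only [Set.restrict_apply, Set.mem_preimage]
    have hxM : ∀ t ∈ b, (x ∈ f ⁻¹' t ↔ x ∈ u t) := by
      intro t ht
      by_contra h
      exact hx (Set.mem_biUnion ht h)
    exact hxM s hs
  rw [show Mᶜ.domRestrict f = Mᶜ.restrict f from rfl, heq]
  exact (hu s hs).preimage continuous_subtype_val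
end

section
/- For a compact Hausdorff space X, if C(X) is monotone complete (every norm-bounded increasing net of real-valued continuous functions has a least upper bound in C(X,ℝ)), then X is extremally disconnected. -/
/-!
Given an open set `U`, the continuous functions `0 ≤ f ≤ 1` vanishing off `U` form a directed,
norm-bounded family, so by monotone completeness they have a supremum `g` in `C(X, ℝ)`.
Complete regularity pins `g` down: at a point of `U` some member of the family already takes the
value `1`, so `g = 1` on `U` and hence on its closure; at a point outside `closure U` some
continuous `k ≥ 0` equal to `1` on `closure U` vanishes, and `k` bounds the family, so `g = 0`
there. Thus `closure U` is the open set `{g ≠ 0}`.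
-/

open Set

variable {X : Type*} [TopologicalSpace X]

theorem CompletelyRegularSpace.exists_continuousMap_zero_one [CompletelyRegularSpace X]
    {K : Set X} (hK : IsClosed K) {x : X} (hx : x ∉ K) :
    ∃ f : C(X, ℝ), f x = 0 ∧ EqOn f 1 K ∧ 0 ≤ f ∧ f ≤ 1 := by
  obtain ⟨f, hf, hfx, hfK⟩ := CompletelyRegularSpace.completely_regular x K hK hx
  refine ⟨⟨fun y ↦ f y, continuous_subtype_val.comp hf⟩, by simp [hfx], fun y hy ↦ ?_,
    fun y ↦ (f y).2.1, fun y ↦ (f y).2.2⟩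
  simp [hfK hy]

namespace ContinuousMap

def unitBumpsIn (U : Set X) : Set C(X, ℝ) :=
  {f | 0 ≤ f ∧ f ≤ 1 ∧ ∀ x ∉ U, f x = 0}

variable {U : Set X}

theorem zero_mem_unitBumpsIn : (0 : C(X, ℝ)) ∈ unitBumpsIn U :=
  ⟨le_rfl, zero_le_one, fun _ _ ↦ rfl⟩

theorem supClosed_unitBumpsIn : SupClosed (unitBumpsIn U) := by
  rintro f ⟨hf0, hf1, hfU⟩ g ⟨-, hg1, hgU⟩
  exact ⟨le_sup_of_le_left hf0, sup_le hf1 hg1, fun x hx ↦ by simp [hfU x hx, hgU x hx]⟩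

theorem norm_le_one_of_mem_unitBumpsIn [CompactSpace X] {f : C(X, ℝ)}
    (hf : f ∈ unitBumpsIn U) : ‖f‖ ≤ 1 :=
  (norm_le _ zero_le_one).mpr fun x ↦
    abs_le.mpr ⟨(neg_nonpos.mpr zero_le_one).trans (hf.1 x), hf.2.1 x⟩

theorem exists_mem_unitBumpsIn_eq_one [CompletelyRegularSpace X] (hU : IsOpen U) {x : X}
    (hx : x ∈ U) : ∃ f ∈ unitBumpsIn U, f x = 1 := by
  obtain ⟨k, hkx, hkU, hk0, hk1⟩ :=
    CompletelyRegularSpace.exists_continuousMap_zero_one hU.isClosed_compl (not_not.mpr hx)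
  refine ⟨1 - k, ⟨sub_nonneg.mpr hk1, sub_le_self _ hk0, fun y hy ↦ ?_⟩, by simp [hkx]⟩
  simp [hkU hy]

variable [CompletelyRegularSpace X] {g : C(X, ℝ)}

theorem apply_eq_one_of_isLUB_unitBumpsIn (hU : IsOpen U) (hg : IsLUB (unitBumpsIn U) g)
    {x : X} (hx : x ∈ closure U) : g x = 1 := by
  have hg1 : g ≤ 1 := hg.2 fun f hf ↦ hf.2.1
  have hgU : U ⊆ g ⁻¹' {1} := fun y hy ↦ by
    obtain ⟨f, hf, hfy⟩ := exists_mem_unitBumpsIn_eq_one hU hy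
    exact le_antisymm (hg1 y) (hfy ▸ hg.1 hf y)
  exact closure_minimal hgU (isClosed_singleton.preimage g.continuous) hx

theorem apply_eq_zero_of_isLUB_unitBumpsIn (hg : IsLUB (unitBumpsIn U) g) {x : X}
    (hx : x ∉ closure U) : g x = 0 := by
  obtain ⟨k, hkx, hkU, hk0, -⟩ :=
    CompletelyRegularSpace.exists_continuousMap_zero_one isClosed_closure hx
  have hgk : g ≤ k := hg.2 fun f ⟨_, hf1, hfU⟩ y ↦ by
    by_cases hy : y ∈ U
    · simpa [hkU (subset_closure hy)] using hf1 y
    · simpa [hfU y hy] using hk0 y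
  exact le_antisymm (hkx ▸ hgk x) (hg.1 zero_mem_unitBumpsIn x)

theorem isOpen_closure_of_isLUB_unitBumpsIn (hU : IsOpen U) (hg : IsLUB (unitBumpsIn U) g) :
    IsOpen (closure U) := by
  have : closure U = (g ⁻¹' {0})ᶜ := by
    ext x
    by_cases hx : x ∈ closure U
    · simp [hx, apply_eq_one_of_isLUB_unitBumpsIn hU hg hx]
    · simp [hx, apply_eq_zero_of_isLUB_unitBumpsIn hg hx]
  exact this ▸ (isClosed_singleton.preimage g.continuous).isOpen_compl

end ContinuousMap

/-- For a compact Hausdorff space `X`, if `C(X, ℝ)` is monotone complete (every norm-bounded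
increasing net of real-valued continuous functions has a least upper bound), then `X` is
extremally disconnected. -/
theorem extremallyDisconnected_of_monotone_complete {X : Type u} [TopologicalSpace X]
    [CompactSpace X] [T2Space X]
    (hcomplete : ∀ (ι : Type u) (_ : Preorder ι),
      ∀ (_ : IsDirected ι (· ≤ ·)) (_ : Nonempty ι) (f : ι → C(X, ℝ)),
        Monotone f → (∃ C : ℝ, ∀ i, ‖f i‖ ≤ C) → ∃ g : C(X, ℝ), IsLUB (Set.range f) g) :
    ExtremallyDisconnected X := by
  refine ⟨fun U hU ↦ ?_⟩
  obtain ⟨g, hg⟩ := hcomplete (ContinuousMap.unitBumpsIn U) inferInstance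
    ContinuousMap.supClosed_unitBumpsIn.directedOn.isDirectedOrder
    ⟨⟨0, ContinuousMap.zero_mem_unitBumpsIn⟩⟩ Subtype.val (fun _ _ h ↦ h)
    ⟨1, fun f ↦ ContinuousMap.norm_le_one_of_mem_unitBumpsIn f.2⟩
  rw [Subtype.range_coe] at hg
  exact ContinuousMap.isOpen_closure_of_isLUB_unitBumpsIn hU hg
end
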